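/- For all integers n ≥ 1, 2·F_{4n+2} − 3·F_{4n−2} = L_{2n} + L_{2n−2} + 4·∑_{k=0}^{n−1} F_{4k+2}·L_{2n−2k−2}. -/

import Mathlib

/-!
Both `a k = F (4 k + 2)` and `b j = L (2 j)` satisfy second-order linear recurrences
(`a (k + 2) = 7 a (k + 1) - a k`, `b (j + 2) = 3 b (j + 1) - b j`), so the convolution
`∑ a k * b (m - k)` satisfies the recurrence of `b` up to two boundary terms. The closed form
`2 a (m + 1) - 3 a m - b (m + 1) - b m` of `4 ∑ a k * b (m - k)` satisfies the same inhomogeneous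
recurrence, which gives the identity by two-step induction.
-/

def lucas : ℕ → ℕ
  | 0 => 2
  | 1 => 1
  | n + 2 => lucas (n + 1) + lucas n

open Finset

theorem fib_four_mul_add_two_rec (k : ℕ) :
    (Nat.fib (4 * (k + 2) + 2) : ℤ) = 7 * Nat.fib (4 * (k + 1) + 2) - Nat.fib (4 * k + 2) := by
  have h : Nat.fib (4 * k + 2 + 8) + Nat.fib (4 * k + 2) = 7 * Nat.fib (4 * k + 2 + 4) := by
    simp only [Nat.fib_add_two]
    ring
  rw [show 4 * (k + 2) + 2 = 4 * k + 2 + 8 by ring, show 4 * (k + 1) + 2 = 4 * k + 2 + 4 by ring]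
  omega

theorem lucas_two_mul_rec (j : ℕ) :
    (lucas (2 * (j + 2)) : ℤ) = 3 * lucas (2 * (j + 1)) - lucas (2 * j) := by
  have h : lucas (2 * j + 4) + lucas (2 * j) = 3 * lucas (2 * j + 2) := by
    simp only [lucas]
    ring
  rw [show 2 * (j + 2) = 2 * j + 4 by ring, show 2 * (j + 1) = 2 * j + 2 by ring]
  omega

theorem sum_range_mul_sub_of_linearRec {R : Type*} [CommRing R] (a b : ℕ → R) (c : R)
    (hb : ∀ j, b (j + 2) = c * b (j + 1) - b j) (m : ℕ) :
    ∑ k ∈ range (m + 3), a k * b (m + 2 - k) =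
      c * ∑ k ∈ range (m + 2), a k * b (m + 1 - k) - ∑ k ∈ range (m + 1), a k * b (m - k) +
        a (m + 2) * b 0 + a (m + 1) * (b 1 - c * b 0) := by
  have hbulk : ∑ k ∈ range (m + 1), a k * b (m + 2 - k) =
      ∑ k ∈ range (m + 1), (c * (a k * b (m + 1 - k)) - a k * b (m - k)) := by
    refine sum_congr rfl fun k hk => ?_
    have hkm : k ≤ m := Nat.lt_succ_iff.mp (mem_range.mp hk)
    rw [show m + 2 - k = m - k + 2 by omega, show m + 1 - k = m - k + 1 by omega, hb]
    ring
  rw [sum_range_succ, sum_range_succ, hbulk, sum_sub_distrib, ← mul_sum, sum_range_succ _ (m + 1)]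
  simp only [Nat.sub_self, show m + 2 - (m + 1) = 1 by omega]
  ring

theorem four_mul_sum_fib_mul_lucas (m : ℕ) :
    4 * ∑ k ∈ range (m + 1), (Nat.fib (4 * k + 2) : ℤ) * lucas (2 * (m - k)) =
      2 * Nat.fib (4 * (m + 1) + 2) - 3 * Nat.fib (4 * m + 2) - lucas (2 * (m + 1)) -
        lucas (2 * m) := by
  induction m using Nat.twoStepInduction with
  | zero => decide
  | one => decide
  | more m ih₀ ih₁ =>
    rw [sum_range_mul_sub_of_linearRec (fun k => (Nat.fib (4 * k + 2) : ℤ))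
      (fun j => (lucas (2 * j) : ℤ)) 3 lucas_two_mul_rec m, show m + 2 + 1 = m + 3 from rfl,
      show lucas (2 * 0) = 2 from rfl, show lucas (2 * 1) = 3 from rfl]
    rw [show m + 1 + 1 = m + 2 from rfl] at ih₁
    push_cast
    linear_combination 3 * ih₁ - ih₀ - 2 * fib_four_mul_add_two_rec (m + 1) +
      3 * fib_four_mul_add_two_rec m + lucas_two_mul_rec (m + 1) + lucas_two_mul_rec m

theorem stmt15 (n : ℕ) (hn : 1 ≤ n) :
    2 * (Nat.fib (4 * n + 2) : ℤ) - 3 * (Nat.fib (4 * n - 2) : ℤ) =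
      (lucas (2 * n) : ℤ) + (lucas (2 * n - 2) : ℤ) +
        4 * ∑ k ∈ Finset.range n, (Nat.fib (4 * k + 2) : ℤ) * (lucas (2 * n - 2 * k - 2) : ℤ) := by
  obtain ⟨m, rfl⟩ : ∃ m, n = m + 1 := ⟨n - 1, by omega⟩
  have hsum : ∑ k ∈ range (m + 1), (Nat.fib (4 * k + 2) : ℤ) * lucas (2 * (m + 1) - 2 * k - 2) =
      ∑ k ∈ range (m + 1), (Nat.fib (4 * k + 2) : ℤ) * lucas (2 * (m - k)) :=
    sum_congr rfl fun k _ => by rw [show 2 * (m + 1) - 2 * k - 2 = 2 * (m - k) by omega]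
  rw [hsum, four_mul_sum_fib_mul_lucas, show 4 * (m + 1) - 2 = 4 * m + 2 by omega,
    show 2 * (m + 1) - 2 = 2 * m by omega]
  ring
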